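/- Fix z ∈ ℂ with Re z > 0, and set α* = min(1, Re z) and β = max(1, Re z). Then the function t ↦ e^{z log t} on (0,∞), extended by the value 0 at t = 0, is α*-Hölder continuous on every compact subset K of [0,∞), with Hölder coefficient bounded above by (|z|/α*) · sup_{t∈K} t^{β−1} (with the convention t⁰ = 1 for all t ≥ 0). -/

import Mathlib

open scoped Real
open scoped NNReal

/-- Derivative of `y ↦ (y:ℂ)^w` at `x ≠ 0`. -/
lemma hasDerivAt_ofReal_cpow_const'' {x : ℝ} (hx : x ≠ 0) {w : ℂ} (hw : w ≠ 0) :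
    HasDerivAt (fun y : ℝ => (y : ℂ) ^ w) (w * x ^ (w - 1)) x := by
  have h := hasDerivAt_ofReal_cpow_const' hx (r := w - 1) (by
    intro h; apply hw; linear_combination h)
  rw [sub_add_cancel] at h
  have h2 := h.const_mul w
  have : (fun y : ℝ => w * ((y : ℂ) ^ w / w)) = fun y : ℝ => (y : ℂ) ^ w := by
    funext y; field_simp
  rwa [this] at h2

/-- Mean value bound for `t ↦ t^w` on `[s,t] ⊆ (0,∞)` when `Re w ≥ 1`. -/
lemma cpow_sub_cpow_le {w : ℂ} (hw : 1 ≤ w.re) {s t : ℝ} (hs : 0 < s) (hst : s ≤ t) :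
    ‖(t : ℂ) ^ w - (s : ℂ) ^ w‖ ≤ ‖w‖ * t ^ (w.re - 1) * (t - s) := by
  have hw0 : w ≠ 0 := by
    intro h; rw [h] at hw; simp at hw; linarith
  have key := norm_image_sub_le_of_norm_deriv_le_segment'
    (f := fun y : ℝ => (y : ℂ) ^ w) (f' := fun y : ℝ => w * (y : ℂ) ^ (w - 1))
    (a := s) (b := t) (C := ‖w‖ * t ^ (w.re - 1))
    (fun x hx => (hasDerivAt_ofReal_cpow_const''
      (lt_of_lt_of_le hs hx.1).ne' hw0).hasDerivWithinAt)
    (fun x hx => by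
      have hx0 : 0 < x := lt_of_lt_of_le hs hx.1
      rw [norm_mul,
        Complex.norm_cpow_eq_rpow_re_of_pos hx0]
      have : x ^ (w - 1).re ≤ t ^ (w.re - 1) := by
        rw [Complex.sub_re, Complex.one_re]
        exact Real.rpow_le_rpow hx0.le (le_trans hx.2.le le_rfl) (by linarith)
      exact mul_le_mul_of_nonneg_left this (norm_nonneg w))
    t (Set.right_mem_Icc.2 hst)
  simpa using key

private lemma rpow_sub_rpow_le {s t p : ℝ} (hs : 0 ≤ s) (hst : s ≤ t)
    (hp : 0 ≤ p) (hp1 : p ≤ 1) : t ^ p - s ^ p ≤ (t - s) ^ p := by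
  have h := NNReal.rpow_add_le_add_rpow (NNReal.mk (t - s) (by linarith)) (NNReal.mk s hs) hp hp1
  rw [← NNReal.coe_le_coe] at h
  push_cast at h
  have he : t - s + s = t := by ring
  rw [he] at h
  linarith

/-- The key pointwise Hölder estimate for `0 ≤ s ≤ t`. -/
lemma key_estimate (z : ℂ) (hz : 0 < z.re) {s t : ℝ} (hs : 0 ≤ s) (hst : s ≤ t) :
    ‖(if t = 0 then 0 else Complex.exp (z * Real.log t)) -
        (if s = 0 then 0 else Complex.exp (z * Real.log s))‖ ≤
      ‖z‖ / min 1 z.re * t ^ (max 1 z.re - 1) * (t - s) ^ min 1 z.re := by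
  have hz0 : z ≠ 0 := by intro h; rw [h] at hz; simp at hz
  set a := z.re with ha
  have hα : 0 < min 1 a := lt_min one_pos hz
  have hza : a ≤ ‖z‖ := le_trans (le_abs_self _) (Complex.abs_re_le_norm z)
  have hF : ∀ u : ℝ, 0 < u →
      (if u = 0 then 0 else Complex.exp (z * Real.log u)) = (u : ℂ) ^ z := by
    intro u hu
    rw [if_neg hu.ne', Complex.cpow_def_of_ne_zero (by exact_mod_cast hu.ne'),
      Complex.ofReal_log hu.le, mul_comm]
  rcases eq_or_lt_of_le (hs.trans hst) with ht | ht
  · -- t = 0, hence s = 0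
    have ht0 : t = 0 := ht.symm
    have hs0 : s = 0 := le_antisymm (hst.trans_eq ht0) hs
    rw [ht0, hs0]
    simp [Real.zero_rpow (ne_of_gt hα)]
  · rcases eq_or_lt_of_le hs with hs0 | hs0
    · -- s = 0 < t
      rw [← hs0, if_pos rfl, sub_zero, hF t ht,
        Complex.norm_cpow_eq_rpow_re_of_pos ht, sub_zero]
      have hcomb : t ^ (max 1 a - 1) * t ^ min 1 a = t ^ a := by
        rw [← Real.rpow_add ht]
        congr 1
        rcases le_total 1 a with h | h <;>
          simp [max_eq_right, max_eq_left, min_eq_left, min_eq_right, h]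
      rw [mul_assoc, hcomb]
      have h1 : (1 : ℝ) ≤ ‖z‖ / min 1 a := by
        rw [le_div_iff₀ hα, one_mul]
        exact le_trans (min_le_right 1 a) hza
      nlinarith [Real.rpow_nonneg ht.le a, Real.rpow_pos_of_pos ht a]
    · -- 0 < s ≤ t
      rw [hF t ht, hF s hs0]
      rcases le_or_gt 1 a with hone | hone
      · -- Re z ≥ 1
        have h := cpow_sub_cpow_le (w := z) hone hs0 hst
        rw [min_eq_left hone, max_eq_right hone, div_one, Real.rpow_one]
        exact h.trans_eq rfl
      · -- Re z < 1
        set w := z / (a : ℂ) with hwdef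
        have hwre : w.re = 1 := by
          rw [hwdef, Complex.div_ofReal_re, ← ha, div_self hz.ne']
        have hsa : (0 : ℝ) < s ^ a := Real.rpow_pos_of_pos hs0 a
        have hsta : s ^ a ≤ t ^ a := Real.rpow_le_rpow hs0.le hst hz.le
        have h := cpow_sub_cpow_le (w := w) hwre.ge hsa hsta
        rw [hwre] at h
        simp only [sub_self, Real.rpow_zero, mul_one] at h
        have hconv : ∀ u : ℝ, 0 < u → ((u ^ a : ℝ) : ℂ) ^ w = (u : ℂ) ^ z := by
          intro u hu
          rw [← Complex.cpow_mul_ofReal_nonneg hu.le a w, hwdef, mul_comm,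
            div_mul_cancel₀]
          exact_mod_cast hz.ne'
        rw [hconv t ht, hconv s hs0] at h
        have hnw : ‖w‖ = ‖z‖ / a := by
          rw [hwdef, norm_div, Complex.norm_real, Real.norm_eq_abs, abs_of_pos hz]
        rw [hnw] at h
        rw [min_eq_right hone.le, max_eq_left hone.le, sub_self, Real.rpow_zero, mul_one]
        refine h.trans ?_
        have hsub : t ^ a - s ^ a ≤ (t - s) ^ a :=
          rpow_sub_rpow_le hs0.le hst hz.le hone.le
        have : 0 ≤ ‖z‖ / a := div_nonneg (norm_nonneg z) hz.le
        nlinarith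

/-- For `z ∈ ℂ` with `Re z > 0`, with `α* = min(1, Re z)` and `β = max(1, Re z)`,
the function `t ↦ e^{z log t}` (continued by `0` at `t = 0`) is `α*`-Hölder continuous
on every compact subset `K` of `[0,∞)`, with Hölder coefficient bounded above by
`(|z|/α*) ⬝ sup_{t ∈ K} t^{β−1}` (with the convention `t^0 = 1`). -/
theorem complex_power_holder_on_compact (z : ℂ) (hz : 0 < z.re)
    (K : Set ℝ) (hK : IsCompact K) (hK0 : K ⊆ Set.Ici 0) :
    ∀ t ∈ K, ∀ s ∈ K,
      ‖(if t = 0 then 0 else Complex.exp (z * Real.log t)) -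
          (if s = 0 then 0 else Complex.exp (z * Real.log s))‖ ≤
        ‖z‖ / min 1 z.re * sSup ((fun u : ℝ => u ^ (max 1 z.re - 1)) '' K) *
          |t - s| ^ min 1 z.re := by
  intro t ht s hs
  have hβ : (0 : ℝ) ≤ max 1 z.re - 1 := by
    have := le_max_left 1 z.re; linarith
  have hcont : ContinuousOn (fun u : ℝ => u ^ (max 1 z.re - 1)) K :=
    fun x _ => (Real.continuousAt_rpow_const x _ (Or.inr hβ)).continuousWithinAt
  have hBdd : BddAbove ((fun u : ℝ => u ^ (max 1 z.re - 1)) '' K) :=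
    (hK.image_of_continuousOn hcont).bddAbove
  have hmain : ∀ u ∈ K, ∀ v ∈ K, v ≤ u →
      ‖(if u = 0 then 0 else Complex.exp (z * Real.log u)) -
          (if v = 0 then 0 else Complex.exp (z * Real.log v))‖ ≤
        ‖z‖ / min 1 z.re * sSup ((fun u : ℝ => u ^ (max 1 z.re - 1)) '' K) *
          |u - v| ^ min 1 z.re := by
    intro u hu v hv hvu
    have hkey := key_estimate z hz (hK0 hv) hvu
    rw [abs_of_nonneg (sub_nonneg.2 hvu)]
    refine hkey.trans ?_
    have hle : u ^ (max 1 z.re - 1) ≤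
        sSup ((fun u : ℝ => u ^ (max 1 z.re - 1)) '' K) :=
      le_csSup hBdd ⟨u, hu, rfl⟩
    have h1 : 0 ≤ ‖z‖ / min 1 z.re :=
      div_nonneg (norm_nonneg z) (le_min zero_le_one hz.le)
    have h2 : 0 ≤ (u - v) ^ min 1 z.re := Real.rpow_nonneg (by linarith) _
    gcongr
  rcases le_total s t with h | h
  · exact hmain t ht s hs h
  · rw [norm_sub_rev, abs_sub_comm]
    exact hmain s hs t ht h
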